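/- Let Z be a nonempty finite type, P : Z → Z → ℝ a row-stochastic matrix that is irreducible, W a nonempty subset of Z, and a ∈ Z. For b ∈ W and m ≥ 1, let F_b(m) be the sum of Prob(x) over all paths x of length m with x₀ = a that visit W and whose first state belonging to W is b (i.e., some x_i ∈ W, and x_j = b for the least index j with x_j ∈ W). Then for every b ∈ W the limit p̄_{W,a,b} = lim_{m→∞} F_b(m) exists, and ∑_{b∈W} p̄_{W,a,b} = 1. -/

import Mathlib

open scoped Classical

/-- Probability of a path `x = (x₀, …, x_m)` of length `m`:
`Prob(x) = ∏_{i=1}^m P(x_{i-1}, x_i)`. -/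
def pathProb {Z : Type*} (P : Z → Z → ℝ) {m : ℕ} (x : Fin (m + 1) → Z) : ℝ :=
  ∏ i : Fin m, P (x i.castSucc) (x i.succ)

/-- `P` is a row-stochastic matrix. -/
def RowStochastic {Z : Type*} [Fintype Z] (P : Z → Z → ℝ) : Prop :=
  (∀ a b, 0 ≤ P a b) ∧ ∀ a, ∑ b, P a b = 1

/-- The chain is irreducible: for all `a b` there is `m ≥ 1` with `(P^m)(a,b) > 0`. -/
def IsIrreducibleChain {Z : Type*} [Fintype Z] [DecidableEq Z] (P : Z → Z → ℝ) : Prop :=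
  ∀ a b : Z, ∃ m : ℕ, 1 ≤ m ∧ 0 < (Matrix.of P ^ m) a b

/-- `F_b(m)`: the sum of `Prob(x)` over all paths `x` of length `m` with `x₀ = a` that
visit `W` and whose first state belonging to `W` is `b`. -/
noncomputable def firstVisitProb {Z : Type*} [Fintype Z] (P : Z → Z → ℝ) (W : Finset Z)
    (a b : Z) (m : ℕ) : ℝ :=
  ∑ x ∈ Finset.univ.filter (fun x : Fin (m + 1) → Z =>
      x 0 = a ∧ ∃ j : Fin (m + 1), x j = b ∧ ∀ i < j, x i ∉ W),
    pathProb P x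

/-
`F_b(m)` is nondecreasing in `m` and bounded by `1`, so it converges. Conditioning on the first
step gives recursions for `F_b` and for the probability `A_a(m)` that a path from `a` avoids `W`
up to time `m`, and these show `∑_{b ∈ W} F_b(m) = 1 - A_a(m)`. By irreducibility some `N` has
`A_z(N) ≤ c < 1` for every `z`; restarting the chain gives `A_a(n + N) ≤ c · A_a(n)`, which
forces the limit of the nonincreasing sequence `A_a` to be `0`.
-/

open Finset Filter Topology

section PathMass

lemma pathProb_cons {Z : Type*} (P : Z → Z → ℝ) {m : ℕ} (a : Z) (y : Fin (m + 1) → Z) :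
    pathProb P (Fin.cons a y : Fin (m + 2) → Z) = P a (y 0) * pathProb P y := by
  simp [pathProb, Fin.prod_univ_succ]

variable {Z : Type*} [Fintype Z] (P : Z → Z → ℝ)

noncomputable def pathMass (a : Z) (m : ℕ) (q : (Fin (m + 1) → Z) → Prop) : ℝ :=
  ∑ x ∈ univ.filter (fun x => x 0 = a ∧ q x), pathProb P x

lemma pathMass_zero (a : Z) (q : (Fin 1 → Z) → Prop) :
    pathMass P a 0 q = if q (fun _ => a) then 1 else 0 := by
  rw [pathMass, sum_filter, Fintype.sum_eq_single (fun _ : Fin 1 => a)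
    fun x hx => if_neg fun h => hx (funext fun i => Subsingleton.elim i (0 : Fin 1) ▸ h.1)]
  simp [pathProb]

lemma pathMass_succ (a : Z) (m : ℕ) (q : (Fin (m + 2) → Z) → Prop) :
    pathMass P a (m + 1) q = ∑ z, P a z * pathMass P z m (fun y => q (Fin.cons a y)) := by
  simp only [pathMass, sum_filter, mul_sum]
  rw [← (Fin.consEquiv fun _ => Z).sum_comp, Fintype.sum_prod_type, sum_comm]
  simp only [Fin.consEquiv, Equiv.coe_fn_mk, Fin.cons_zero, pathProb_cons, ite_and, sum_ite_eq',
    mem_univ, if_true, mul_ite, mul_zero]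
  rw [sum_comm]
  simp

lemma pathMass_nonneg (hP : ∀ a b, 0 ≤ P a b) (a : Z) (m : ℕ) (q : (Fin (m + 1) → Z) → Prop) :
    0 ≤ pathMass P a m q :=
  sum_nonneg fun _ _ => prod_nonneg fun _ _ => hP _ _

lemma pathMass_mono (hP : ∀ a b, 0 ≤ P a b) (a : Z) (m : ℕ) {q q' : (Fin (m + 1) → Z) → Prop}
    (h : ∀ x, q x → q' x) : pathMass P a m q ≤ pathMass P a m q' :=
  sum_le_sum_of_subset_of_nonneg (monotone_filter_right _ fun x _ => And.imp_right (h x))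
    fun _ _ _ => prod_nonneg fun _ _ => hP _ _

lemma pathMass_false (a : Z) (m : ℕ) : pathMass P a m (fun _ => False) = 0 := by
  simp [pathMass]

lemma pathMass_true (hP : RowStochastic P) (a : Z) (m : ℕ) :
    pathMass P a m (fun _ => True) = 1 := by
  induction m generalizing a with
  | zero => simp [pathMass_zero]
  | succ m ih => simp [pathMass_succ, ih, hP.2]

lemma pathMass_le_one (hP : RowStochastic P) (a : Z) (m : ℕ) (q : (Fin (m + 1) → Z) → Prop) :
    pathMass P a m q ≤ 1 :=
  pathMass_true P hP a m ▸ pathMass_mono P hP.1 a m fun _ _ => trivial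

end PathMass

section FirstVisit

variable {Z : Type*} [Fintype Z] (P : Z → Z → ℝ) (W : Finset Z)

noncomputable def avoidProb (a : Z) (m : ℕ) : ℝ :=
  pathMass P a m (fun x => ∀ i, x i ∉ W)

lemma firstVisitProb_eq_pathMass (a b : Z) (m : ℕ) :
    firstVisitProb P W a b m = pathMass P a m (fun x => ∃ j, x j = b ∧ ∀ i < j, x i ∉ W) := by
  unfold firstVisitProb pathMass
  congr

lemma firstVisitProb_nonneg (hP : ∀ a b, 0 ≤ P a b) (a b : Z) (m : ℕ) :
    0 ≤ firstVisitProb P W a b m :=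
  firstVisitProb_eq_pathMass P W a b m ▸ pathMass_nonneg P hP _ _ _

lemma firstVisitProb_le_one (hP : RowStochastic P) (a b : Z) (m : ℕ) :
    firstVisitProb P W a b m ≤ 1 :=
  firstVisitProb_eq_pathMass P W a b m ▸ pathMass_le_one P hP _ _ _

lemma firstVisitProb_zero (a b : Z) : firstVisitProb P W a b 0 = if a = b then 1 else 0 := by
  simp [firstVisitProb_eq_pathMass, pathMass_zero, Fin.exists_fin_one]

lemma firstVisitProb_succ (hP : RowStochastic P) (a b : Z) (m : ℕ) :
    firstVisitProb P W a b (m + 1) =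
      if a = b then 1 else if a ∈ W then 0 else ∑ z, P a z * firstVisitProb P W z b m := by
  have hcons (y : Fin (m + 1) → Z) :
      (∃ j, (Fin.cons a y : Fin (m + 2) → Z) j = b ∧
          ∀ i < j, (Fin.cons a y : Fin (m + 2) → Z) i ∉ W) ↔
        a = b ∨ a ∉ W ∧ ∃ j, y j = b ∧ ∀ i < j, y i ∉ W := by
    simp only [Fin.exists_fin_succ (n := m + 1), Fin.forall_fin_succ (n := m + 1), Fin.cons_zero,
      Fin.cons_succ, Fin.succ_lt_succ_iff, Fin.succ_pos, Fin.not_lt_zero, IsEmpty.forall_iff,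
      forall_const, and_true, true_and, exists_and_left, and_left_comm (a := _ = b)]
  simp only [firstVisitProb_eq_pathMass, pathMass_succ, hcons]
  split_ifs with hab haW
  · simp [hab, pathMass_true P hP, hP.2]
  · simp [hab, haW, pathMass_false]
  · simp [hab, haW]

lemma avoidProb_zero (a : Z) : avoidProb P W a 0 = if a ∈ W then 0 else 1 := by
  simp [avoidProb, pathMass_zero]

lemma avoidProb_succ (a : Z) (m : ℕ) :
    avoidProb P W a (m + 1) = if a ∈ W then 0 else ∑ z, P a z * avoidProb P W z m := by
  simp only [avoidProb, pathMass_succ, Fin.forall_fin_succ, Fin.cons_zero, Fin.cons_succ]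
  split_ifs with ha
  · simp [ha, pathMass_false]
  · simp [ha]

lemma avoidProb_of_mem {a : Z} (ha : a ∈ W) (m : ℕ) : avoidProb P W a m = 0 := by
  cases m <;> simp [avoidProb_zero, avoidProb_succ, ha]

lemma monotone_firstVisitProb (hP : RowStochastic P) (a b : Z) :
    Monotone (firstVisitProb P W a b) := by
  refine monotone_nat_of_le_succ fun m => ?_
  induction m generalizing a with
  | zero =>
    rw [firstVisitProb_zero, firstVisitProb_succ P W hP]
    split_ifs
    exacts [le_rfl, le_rfl,
      sum_nonneg fun z _ => mul_nonneg (hP.1 a z) (firstVisitProb_nonneg P W hP.1 z b 0)]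
  | succ m ih =>
    rw [firstVisitProb_succ P W hP a b (m + 1), firstVisitProb_succ P W hP a b m]
    split_ifs
    exacts [le_rfl, le_rfl, sum_le_sum fun z _ => mul_le_mul_of_nonneg_left (ih z) (hP.1 a z)]

lemma sum_firstVisitProb_add_avoidProb (hP : RowStochastic P) (a : Z) (m : ℕ) :
    ∑ b ∈ W, firstVisitProb P W a b m + avoidProb P W a m = 1 := by
  induction m generalizing a with
  | zero =>
    by_cases ha : a ∈ W <;> simp [firstVisitProb_zero, avoidProb_zero, ha]
  | succ m ih =>
    by_cases ha : a ∈ W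
    · simp [firstVisitProb_succ P W hP, avoidProb_of_mem P W ha, ha]
    have hne : ∀ b ∈ W, a ≠ b := fun b hb hab => ha (hab ▸ hb)
    rw [sum_congr rfl fun b hb => by rw [firstVisitProb_succ P W hP, if_neg (hne b hb), if_neg ha],
      avoidProb_succ, if_neg ha, sum_comm, ← sum_add_distrib]
    simp_rw [← mul_sum, ← mul_add, ih, mul_one, hP.2]

lemma antitone_avoidProb (hP : RowStochastic P) (a : Z) : Antitone (avoidProb P W a) := by
  intro m n hmn
  have hF : ∑ b ∈ W, firstVisitProb P W a b m ≤ ∑ b ∈ W, firstVisitProb P W a b n :=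
    sum_le_sum fun b _ => monotone_firstVisitProb P W hP a b hmn
  linarith [sum_firstVisitProb_add_avoidProb P W hP a m,
    sum_firstVisitProb_add_avoidProb P W hP a n]

lemma avoidProb_add_le_mul (hP : ∀ a b, 0 ≤ P a b) {t : ℕ} {C : ℝ}
    (hC : ∀ z, avoidProb P W z t ≤ C) (a : Z) (n : ℕ) :
    avoidProb P W a (n + t) ≤ avoidProb P W a n * C := by
  induction n generalizing a with
  | zero =>
    by_cases ha : a ∈ W
    · simp [avoidProb_of_mem P W ha]
    · simpa [avoidProb_zero, ha] using hC a
  | succ n ih =>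
    rw [Nat.add_right_comm, avoidProb_succ, avoidProb_succ]
    split_ifs
    · simp
    · rw [sum_mul]
      exact sum_le_sum fun z _ => by
        rw [mul_assoc]
        exact mul_le_mul_of_nonneg_left (ih z) (hP a z)

variable [DecidableEq Z]

lemma avoidProb_add_pow_apply_le_one (hP : RowStochastic P) {w : Z} (hw : w ∈ W) (a : Z) (m : ℕ) :
    avoidProb P W a m + (Matrix.of P ^ m) a w ≤ 1 := by
  induction m generalizing a with
  | zero =>
    by_cases haw : a = w
    · simp [avoidProb_zero, haw, hw]
    · rw [pow_zero, Matrix.one_apply_ne haw, avoidProb_zero]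
      split_ifs <;> norm_num
  | succ m ih =>
    by_cases ha : a ∈ W
    · have hstoch : Matrix.of P ∈ Matrix.rowStochastic ℝ Z := Matrix.mem_rowStochastic_iff_sum.2 hP
      rw [avoidProb_of_mem P W ha, zero_add]
      exact Matrix.le_one_of_mem_rowStochastic (pow_mem hstoch _)
    · rw [avoidProb_succ, if_neg ha, pow_succ', Matrix.mul_apply, ← sum_add_distrib]
      calc ∑ z, (P a z * avoidProb P W z m + Matrix.of P a z * (Matrix.of P ^ m) z w)
          = ∑ z, P a z * (avoidProb P W z m + (Matrix.of P ^ m) z w) := by simp [mul_add]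
        _ ≤ ∑ z, P a z * 1 := sum_le_sum fun z _ => mul_le_mul_of_nonneg_left (ih z) (hP.1 a z)
        _ = 1 := by simp [hP.2]

lemma exists_forall_avoidProb_lt_one (hP : RowStochastic P) (hirr : IsIrreducibleChain P)
    {w : Z} (hw : w ∈ W) : ∃ N, ∀ z, avoidProb P W z N < 1 := by
  choose f _ hf using fun z => hirr z w
  obtain ⟨N, hN⟩ := Finite.exists_le f
  refine ⟨N, fun z => (antitone_avoidProb P W hP z (hN z)).trans_lt ?_⟩
  linarith [avoidProb_add_pow_apply_le_one P W hP hw z (f z), hf z]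

lemma tendsto_avoidProb_zero (hP : RowStochastic P) (hirr : IsIrreducibleChain P)
    (hW : W.Nonempty) (a : Z) : Tendsto (avoidProb P W a) atTop (𝓝 0) := by
  obtain ⟨w, hw⟩ := hW
  obtain ⟨N, hN⟩ := exists_forall_avoidProb_lt_one P W hP hirr hw
  have : Nonempty Z := ⟨a⟩
  obtain ⟨z₀, hz₀⟩ := Finite.exists_max (avoidProb P W · N)
  have hnonneg (m : ℕ) : 0 ≤ avoidProb P W a m := pathMass_nonneg P hP.1 _ _ _
  have hL := tendsto_atTop_ciInf (antitone_avoidProb P W hP a) ⟨0, by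
    rintro _ ⟨m, rfl⟩
    exact hnonneg m⟩
  have hLc := le_of_tendsto_of_tendsto' ((tendsto_add_atTop_iff_nat N).2 hL) (hL.mul_const _)
    (avoidProb_add_le_mul P W hP.1 hz₀ a)
  have hL0 := ge_of_tendsto' hL hnonneg
  have hlim : ⨅ m, avoidProb P W a m = 0 := by nlinarith [hN z₀]
  rwa [hlim] at hL

end FirstVisit

theorem stmt_4_general {Z : Type*} [Fintype Z] [DecidableEq Z] (P : Z → Z → ℝ)
    (hP : RowStochastic P) (hirr : IsIrreducibleChain P)
    (W : Finset Z) (hW : W.Nonempty) (a : Z) :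
    ∃ p : Z → ℝ,
      (∀ b ∈ W, Filter.Tendsto (fun m : ℕ => firstVisitProb P W a b m)
        Filter.atTop (nhds (p b))) ∧
      ∑ b ∈ W, p b = 1 := by
  have hF (b : Z) : Tendsto (firstVisitProb P W a b) atTop (𝓝 (⨆ m, firstVisitProb P W a b m)) :=
    tendsto_atTop_ciSup (monotone_firstVisitProb P W hP a b) ⟨1, by
      rintro _ ⟨m, rfl⟩
      exact firstVisitProb_le_one P W hP a b m⟩
  refine ⟨fun b => ⨆ m, firstVisitProb P W a b m, fun b _ => hF b,
    tendsto_nhds_unique (tendsto_finsetSum W fun b _ => hF b) ?_⟩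
  have hsum := (tendsto_avoidProb_zero P W hP hirr hW a).const_sub 1
  rw [sub_zero] at hsum
  exact hsum.congr fun m => by linarith [sum_firstVisitProb_add_avoidProb P W hP a m]

theorem stmt_4 {Z : Type*} [Fintype Z] [Nonempty Z] [DecidableEq Z] (P : Z → Z → ℝ)
    (hP : RowStochastic P) (hirr : IsIrreducibleChain P)
    (W : Finset Z) (hW : W.Nonempty) (a : Z) :
    ∃ p : Z → ℝ,
      (∀ b ∈ W, Filter.Tendsto (fun m : ℕ => firstVisitProb P W a b m)
        Filter.atTop (nhds (p b))) ∧
      ∑ b ∈ W, p b = 1 :=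
  stmt_4_general P hP hirr W hW a
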